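/- arXiv:1611.04510 — 6 statements merged into one kernel-verified Lean document; each statement's English description precedes it below -/
import Mathlib

section
/- Suppose Δt ≤ δ, the sequences w, y, b, d satisfy the discrete scheme, and β ≥ 0 is a real number such that ⟨b_n, χ⟩ ≤ β‖g_V χ‖ for all χ ∈ V. Then the one-step energy inequality holds: ‖w_{n+1}‖² − ‖w_n‖² + (1/3)‖w_{n+1} − w_n‖² + ν·Δt·‖g_V w_{n+1}‖² + (1/4)·δ·Δt·‖g_Q y_{n+1}‖² ≤ (Δt/ν)·β² + 4·δ·Δt·‖g_Q d_n‖². (This is the explicit-constant one-step estimate (56) in the proof of Lemma 3.) -/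
/-!
Test the momentum equation with `χ = w_{n+1}` and use the projection equation at step `n + 1`
to turn the pressure and source terms into `δ ⟪∇y_{n+1}, ∇y_n⟫` and `δ ⟪∇y_{n+1}, ∇d_n⟫`.
Subtracting the projection equations at steps `n` and `n + 1` gives
`δ ‖∇(y_{n+1} - y_n)‖ ≤ ‖w_{n+1} - w_n‖`, which, since `Δt ≤ δ`, lets two thirds of the
numerical dissipation `‖w_{n+1} - w_n‖²` absorb the pressure increment. The forcing and source
terms are handled by Young's inequality.
-/

open RealInnerProductSpace

section InnerProductSpace

variable {E : Type*} [NormedAddCommGroup E] [InnerProductSpace ℝ E]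

theorem two_mul_inner_sub_self (a b : E) :
    2 * ⟪a - b, a⟫ = ‖a‖ ^ 2 - ‖b‖ ^ 2 + ‖a - b‖ ^ 2 := by
  rw [inner_sub_left, norm_sub_sq_real, real_inner_self_eq_norm_sq, real_inner_comm]
  ring

theorem mul_norm_le_of_inner_eq_mul_norm_sq {x e : E} {δ : ℝ}
    (h : ⟪x, e⟫ = δ * ‖e‖ ^ 2) : δ * ‖e‖ ≤ ‖x‖ := by
  rcases (norm_nonneg e).eq_or_lt with he | he
  · rw [← he, mul_zero]
    exact norm_nonneg x
  · have : δ * ‖e‖ * ‖e‖ ≤ ‖x‖ * ‖e‖ := by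
      rw [mul_assoc, ← sq, ← h]
      exact real_inner_le_norm x e
    exact le_of_mul_le_mul_right this he

theorem norm_sq_sub_mul_norm_sub_le_inner (u v : E) : ‖u‖ ^ 2 - ‖u‖ * ‖u - v‖ ≤ ⟪u, v⟫ := by
  have h := real_inner_le_norm u (u - v)
  rw [inner_sub_right, real_inner_self_eq_norm_sq] at h
  linarith

theorem two_mul_inner_le_mul_norm_sq_add {ε : ℝ} (hε : 0 < ε) (x y : E) :
    2 * ⟪x, y⟫ ≤ ε * ‖x‖ ^ 2 + ε⁻¹ * ‖y‖ ^ 2 := by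
  linarith [real_inner_le_norm x y, two_mul_le_add_mul_sq (a := ‖x‖) (b := ‖y‖) hε]

theorem mul_norm_sq_sub_le_two_mul_inner {p₁ p₀ : E} {δ Δt x : ℝ} (hΔt : 0 ≤ Δt)
    (hΔtδ : Δt ≤ δ) (hinc : δ * ‖p₁ - p₀‖ ≤ x) :
    δ * Δt / 2 * ‖p₁‖ ^ 2 - 2 / 3 * x ^ 2 ≤ 2 * δ * Δt * ⟪p₁, p₀⟫ := by
  have hδ : 0 ≤ δ := hΔt.trans hΔtδ
  have hδΔt : 0 ≤ δ * Δt := mul_nonneg hδ hΔt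
  have hlower := mul_le_mul_of_nonneg_left (norm_sq_sub_mul_norm_sub_le_inner p₁ p₀) hδΔt
  -- Young's inequality with constant `3 / 2` keeps half of `δ Δt ‖p₁‖²` and costs `2 / 3 · x²`.
  have hyoung := mul_le_mul_of_nonneg_left
    (two_mul_le_add_mul_sq (a := ‖p₁‖) (b := ‖p₁ - p₀‖) (by norm_num : (0 : ℝ) < 3 / 2)) hδΔt
  have hincrement : δ * Δt * ‖p₁ - p₀‖ ^ 2 ≤ x ^ 2 :=
    calc δ * Δt * ‖p₁ - p₀‖ ^ 2 ≤ δ * δ * ‖p₁ - p₀‖ ^ 2 := by gcongr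
      _ = (δ * ‖p₁ - p₀‖) ^ 2 := by ring
      _ ≤ x ^ 2 := pow_le_pow_left₀ (by positivity) hinc 2
  norm_num at hyoung
  linarith

end InnerProductSpace

theorem one_step_energy_inequality_general
    {E F : Type*} [NormedAddCommGroup E] [InnerProductSpace ℝ E]
    [NormedAddCommGroup F] [InnerProductSpace ℝ F]
    (V : Submodule ℝ E) {Q : Type*} [AddCommGroup Q] [Module ℝ Q]
    (gV : V →ₗ[ℝ] F) (gQ : Q →ₗ[ℝ] E)
    (ν δ Δt : ℝ) (hν : 0 < ν) (hΔt : 0 < Δt) (hΔtδ : Δt ≤ δ)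
    (w : ℕ → V) (y : ℕ → Q) (b : ℕ → E) (d : ℕ → Q)
    (hscheme1 : ∀ n, ∀ χ : V,
      (1 / Δt) * ⟪(w (n + 1) : E) - (w n : E), (χ : E)⟫
        + ν * ⟪gV (w (n + 1)), gV χ⟫ + ⟪gQ (y n), (χ : E)⟫
      = ⟪b n, (χ : E)⟫ + ⟪gQ (d n), (χ : E)⟫)
    (hscheme2 : ∀ n, ∀ ψ : Q, ⟪(w n : E), gQ ψ⟫ = δ * ⟪gQ (y n), gQ ψ⟫)
    (n : ℕ) (β : ℝ)
    (hb : ∀ χ : V, ⟪b n, (χ : E)⟫ ≤ β * ‖gV χ‖) :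
    ‖(w (n + 1) : E)‖ ^ 2 - ‖(w n : E)‖ ^ 2
      + (1 / 3) * ‖(w (n + 1) : E) - (w n : E)‖ ^ 2
      + ν * Δt * ‖gV (w (n + 1))‖ ^ 2
      + (1 / 4) * δ * Δt * ‖gQ (y (n + 1))‖ ^ 2
    ≤ (Δt / ν) * β ^ 2 + 4 * δ * Δt * ‖gQ (d n)‖ ^ 2 := by
  have hδ : 0 ≤ δ := hΔt.le.trans hΔtδ
  have htest := hscheme1 n (w (n + 1))
  rw [real_inner_self_eq_norm_sq, real_inner_comm _ (gQ (y n)), real_inner_comm _ (gQ (d n)),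
    hscheme2, hscheme2] at htest
  have hproj₁ := hscheme2 (n + 1) (y (n + 1) - y n)
  have hproj₀ := hscheme2 n (y (n + 1) - y n)
  rw [map_sub] at hproj₁ hproj₀
  set w₁ : E := ↑(w (n + 1))
  set w₀ : E := ↑(w n)
  set p₁ := gQ (y (n + 1))
  set p₀ := gQ (y n)
  set D := gQ (d n)
  set g := gV (w (n + 1))
  have energy : ‖w₁‖ ^ 2 - ‖w₀‖ ^ 2 + ‖w₁ - w₀‖ ^ 2 + 2 * Δt * (ν * ‖g‖ ^ 2 + δ * ⟪p₁, p₀⟫)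
      = 2 * Δt * (⟪b n, w₁⟫ + δ * ⟪p₁, D⟫) := by
    rw [← two_mul_inner_sub_self, ← htest]
    field_simp
    ring
  have increment : δ * ‖p₁ - p₀‖ ≤ ‖w₁ - w₀‖ := by
    refine mul_norm_le_of_inner_eq_mul_norm_sq ?_
    rw [inner_sub_left, hproj₁, hproj₀, ← mul_sub, ← inner_sub_left, real_inner_self_eq_norm_sq]
  have pressure := mul_norm_sq_sub_le_two_mul_inner hΔt.le hΔtδ increment
  have forcing : 2 * ⟪b n, w₁⟫ ≤ ν * ‖g‖ ^ 2 + ν⁻¹ * β ^ 2 := by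
    linarith [hb (w (n + 1)), two_mul_le_add_mul_sq (a := ‖g‖) (b := β) hν]
  have source : 2 * ⟪p₁, D⟫ ≤ 1 / 4 * ‖p₁‖ ^ 2 + 4 * ‖D‖ ^ 2 := by
    simpa using two_mul_inner_le_mul_norm_sq_add (by norm_num : (0 : ℝ) < 1 / 4) p₁ D
  rw [div_eq_mul_inv Δt ν]
  linarith [mul_le_mul_of_nonneg_left forcing hΔt.le,
    mul_le_mul_of_nonneg_left source (mul_nonneg hδ hΔt.le)]

/-- One-step energy inequality (56) in the proof of Lemma 3. -/
theorem one_step_energy_inequality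
    {E F : Type*} [NormedAddCommGroup E] [InnerProductSpace ℝ E] [CompleteSpace E]
    [NormedAddCommGroup F] [InnerProductSpace ℝ F] [CompleteSpace F]
    (V : Submodule ℝ E) {Q : Type*} [AddCommGroup Q] [Module ℝ Q]
    (gV : V →ₗ[ℝ] F) (gQ : Q →ₗ[ℝ] E)
    (ν δ Δt : ℝ) (hν : 0 < ν) (hδ : 0 < δ) (hΔt : 0 < Δt) (hΔtδ : Δt ≤ δ)
    (w : ℕ → V) (y : ℕ → Q) (b : ℕ → E) (d : ℕ → Q)
    (hscheme1 : ∀ n, ∀ χ : V,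
      (1 / Δt) * ⟪(w (n + 1) : E) - (w n : E), (χ : E)⟫
        + ν * ⟪gV (w (n + 1)), gV χ⟫ + ⟪gQ (y n), (χ : E)⟫
      = ⟪b n, (χ : E)⟫ + ⟪gQ (d n), (χ : E)⟫)
    (hscheme2 : ∀ n, ∀ ψ : Q, ⟪(w n : E), gQ ψ⟫ = δ * ⟪gQ (y n), gQ ψ⟫)
    (n : ℕ) (β : ℝ) (hβ : 0 ≤ β)
    (hb : ∀ χ : V, ⟪b n, (χ : E)⟫ ≤ β * ‖gV χ‖) :
    ‖(w (n + 1) : E)‖ ^ 2 - ‖(w n : E)‖ ^ 2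
      + (1 / 3) * ‖(w (n + 1) : E) - (w n : E)‖ ^ 2
      + ν * Δt * ‖gV (w (n + 1))‖ ^ 2
      + (1 / 4) * δ * Δt * ‖gQ (y (n + 1))‖ ^ 2
    ≤ (Δt / ν) * β ^ 2 + 4 * δ * Δt * ‖gQ (d n)‖ ^ 2 :=
  one_step_energy_inequality_general V gV gQ ν δ Δt hν hΔt hΔtδ w y b d hscheme1 hscheme2 n β hb
end

section
/- Suppose Δt ≤ δ, the sequences w, y, b, d satisfy the discrete scheme, and β : ℕ → ℝ satisfies ⟨b_n, χ⟩ ≤ β_n‖g_V χ‖ for every n and every χ ∈ V. Then for all natural numbers n₀ < n: ‖w_n‖² + (1/3)·Σ_{j=n₀}^{n−1} ‖w_{j+1} − w_j‖² + Δt·Σ_{j=n₀}^{n−1} ( ν‖g_V w_{j+1}‖² + (1/4)·δ‖g_Q y_{j+1}‖² ) ≤ ‖w_{n₀}‖² + Δt·Σ_{j=n₀}^{n−1} ( (1/ν)·β_j² + 4·δ·‖g_Q d_j‖² ). (This is the explicit-constant form of the stability estimate (48) of Lemma 3, where β_j plays the role of the negative-norm ‖b_h^j‖_{−1}.) -/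
/-!
Test the momentum equation with `χ = w (n+1)`. The polarization identity
`2⟪u - v, u⟫ = ‖u‖² - ‖v‖² + ‖u - v‖²` makes the time-difference term telescope, and the
discrete incompressibility constraint turns the lagged pressure term `⟪g_Q y_n, w_{n+1}⟫` into
`δ‖g_Q y_{n+1}‖²` minus a pairing with the increment `w_{n+1} - w_n`; Young's inequality absorbs
that pairing into `‖w_{n+1} - w_n‖²` at the price of `Δt²‖g_Q y_{n+1}‖² ≤ Δt δ ‖g_Q y_{n+1}‖²`,
and the forcing and data terms likewise. Summing the one-step inequality gives the estimate.
-/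

open RealInnerProductSpace Finset

theorem add_sum_Ico_le_add_sum_Ico_of_succ {α : Type*} [AddCommGroup α] [PartialOrder α]
    [IsOrderedAddMonoid α] {a c e : ℕ → α} (h : ∀ j, a (j + 1) + c j ≤ a j + e j)
    {m n : ℕ} (hmn : m ≤ n) :
    a n + ∑ j ∈ Ico m n, c j ≤ a m + ∑ j ∈ Ico m n, e j := by
  have hsum : ∑ j ∈ Ico m n, (a (j + 1) - a j) ≤ ∑ j ∈ Ico m n, (e j - c j) :=
    sum_le_sum fun j _ => by
      rw [sub_le_sub_iff, add_comm (e j)]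
      exact h j
  rw [sum_Ico_sub a hmn, sum_sub_distrib, sub_le_sub_iff] at hsum
  exact hsum.trans_eq (add_comm _ _)

theorem two_mul_real_inner_sub_self {E : Type*} [NormedAddCommGroup E] [InnerProductSpace ℝ E]
    (u v : E) : 2 * ⟪u - v, u⟫ = ‖u‖ ^ 2 - ‖v‖ ^ 2 + ‖u - v‖ ^ 2 := by
  rw [norm_sub_sq_real, inner_sub_left, real_inner_self_eq_norm_sq, real_inner_comm]
  ring

theorem two_mul_real_inner_le_add_mul_sq {E : Type*} [NormedAddCommGroup E] [InnerProductSpace ℝ E]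
    {ε : ℝ} (hε : 0 < ε) (u v : E) : 2 * ⟪u, v⟫ ≤ ε * ‖u‖ ^ 2 + ε⁻¹ * ‖v‖ ^ 2 :=
  calc 2 * ⟪u, v⟫ ≤ 2 * ‖u‖ * ‖v‖ := by
        rw [mul_assoc]; exact mul_le_mul_of_nonneg_left (real_inner_le_norm u v) zero_le_two
    _ ≤ ε * ‖u‖ ^ 2 + ε⁻¹ * ‖v‖ ^ 2 := two_mul_le_add_mul_sq hε

/-- The constraint makes `⟪w n, g (y m)⟫ = δ ⟪g (y n), g (y m)⟫` symmetric in `n` and `m`. -/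
theorem real_inner_lagged_eq_of_forall_inner_eq {E Q : Type*} [NormedAddCommGroup E]
    [InnerProductSpace ℝ E] {g : Q → E} {w : ℕ → E} {y : ℕ → Q} {δ : ℝ}
    (h : ∀ n ψ, ⟪w n, g ψ⟫ = δ * ⟪g (y n), g ψ⟫) (j : ℕ) :
    ⟪g (y j), w (j + 1)⟫ = δ * ‖g (y (j + 1))‖ ^ 2 - ⟪w (j + 1) - w j, g (y (j + 1))⟫ := by
  rw [real_inner_comm, inner_sub_left, h, h, h, real_inner_self_eq_norm_sq,
    real_inner_comm (g (y j))]
  ring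

section Scheme

variable {E F Q : Type*} [NormedAddCommGroup E] [InnerProductSpace ℝ E]
  [NormedAddCommGroup F] [InnerProductSpace ℝ F] {V : Submodule ℝ E} [AddCommGroup Q] [Module ℝ Q]
  {gV : V →ₗ[ℝ] F} {gQ : Q →ₗ[ℝ] E} {ν δ Δt : ℝ} {w : ℕ → V} {y : ℕ → Q} {b : ℕ → E}
  {d : ℕ → Q} {β : ℕ → ℝ}

theorem scheme_energy_step_le (hν : 0 < ν) (hΔt : 0 < Δt) (hΔtδ : Δt ≤ δ)
    (hscheme1 : ∀ n, ∀ χ : V,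
      (1 / Δt) * ⟪(w (n + 1) : E) - (w n : E), (χ : E)⟫
        + ν * ⟪gV (w (n + 1)), gV χ⟫ + ⟪gQ (y n), (χ : E)⟫
      = ⟪b n, (χ : E)⟫ + ⟪gQ (d n), (χ : E)⟫)
    (hscheme2 : ∀ n, ∀ ψ : Q, ⟪(w n : E), gQ ψ⟫ = δ * ⟪gQ (y n), gQ ψ⟫)
    (hb : ∀ n, ∀ χ : V, ⟪b n, (χ : E)⟫ ≤ β n * ‖gV χ‖) (j : ℕ) :
    ‖(w (j + 1) : E)‖ ^ 2 + (1 / 3) * ‖(w (j + 1) : E) - (w j : E)‖ ^ 2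
        + Δt * (ν * ‖gV (w (j + 1))‖ ^ 2 + (1 / 4) * δ * ‖gQ (y (j + 1))‖ ^ 2)
      ≤ ‖(w j : E)‖ ^ 2 + Δt * ((1 / ν) * β j ^ 2 + 4 * δ * ‖gQ (d j)‖ ^ 2) := by
  set u : E := ↑(w (j + 1))
  set v : E := ↑(w j)
  set p : E := gQ (y (j + 1))
  set q : E := gQ (d j)
  have energy := two_mul_real_inner_sub_self u v
  have pressure : ⟪gQ (y j), u⟫ = δ * ‖p‖ ^ 2 - ⟪u - v, p⟫ :=
    real_inner_lagged_eq_of_forall_inner_eq (w := fun n => (w n : E)) hscheme2 j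
  have data : ⟪q, u⟫ = δ * ⟪p, q⟫ := by rw [real_inner_comm, hscheme2]
  have tested : ⟪u - v, u⟫ + Δt * ν * ‖gV (w (j + 1))‖ ^ 2 + Δt * ⟪gQ (y j), u⟫
      = Δt * ⟪b j, u⟫ + Δt * ⟪q, u⟫ := by
    have h := congrArg (Δt * ·) (hscheme1 j (w (j + 1)))
    simp only [mul_add, ← mul_assoc, mul_one_div_cancel hΔt.ne', one_mul,
      real_inner_self_eq_norm_sq] at h
    exact h
  rw [pressure, data] at tested
  have forcing : 2 * ⟪b j, u⟫ ≤ 1 / ν * β j ^ 2 + ν * ‖gV (w (j + 1))‖ ^ 2 := by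
    have young := two_mul_le_add_mul_sq (a := β j) (b := ‖gV (w (j + 1))‖) (inv_pos.2 hν)
    rw [inv_inv, ← one_div] at young
    linarith [hb j (w (j + 1))]
  have data_bound := two_mul_real_inner_le_add_mul_sq (by norm_num : (0 : ℝ) < 4⁻¹) p q
  have increment_bound :=
    two_mul_real_inner_le_add_mul_sq (by norm_num : (0 : ℝ) < 2 / 3) (u - v) (Δt • p)
  rw [real_inner_smul_right, norm_smul, Real.norm_of_nonneg hΔt.le] at increment_bound
  have hΔt_sq : Δt * Δt ≤ Δt * δ := mul_le_mul_of_nonneg_left hΔtδ hΔt.le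
  norm_num at data_bound increment_bound
  linarith [mul_le_mul_of_nonneg_left forcing hΔt.le,
    mul_le_mul_of_nonneg_left data_bound (mul_nonneg hΔt.le (hΔt.le.trans hΔtδ)),
    mul_le_mul_of_nonneg_right hΔt_sq (sq_nonneg ‖p‖)]

end Scheme

theorem stability_estimate_l2_general
    {E F : Type*} [NormedAddCommGroup E] [InnerProductSpace ℝ E]
    [NormedAddCommGroup F] [InnerProductSpace ℝ F]
    (V : Submodule ℝ E) {Q : Type*} [AddCommGroup Q] [Module ℝ Q]
    (gV : V →ₗ[ℝ] F) (gQ : Q →ₗ[ℝ] E)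
    (ν δ Δt : ℝ) (hν : 0 < ν) (hΔt : 0 < Δt) (hΔtδ : Δt ≤ δ)
    (w : ℕ → V) (y : ℕ → Q) (b : ℕ → E) (d : ℕ → Q)
    (hscheme1 : ∀ n, ∀ χ : V,
      (1 / Δt) * ⟪(w (n + 1) : E) - (w n : E), (χ : E)⟫
        + ν * ⟪gV (w (n + 1)), gV χ⟫ + ⟪gQ (y n), (χ : E)⟫
      = ⟪b n, (χ : E)⟫ + ⟪gQ (d n), (χ : E)⟫)
    (hscheme2 : ∀ n, ∀ ψ : Q, ⟪(w n : E), gQ ψ⟫ = δ * ⟪gQ (y n), gQ ψ⟫)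
    (β : ℕ → ℝ)
    (hb : ∀ n, ∀ χ : V, ⟪b n, (χ : E)⟫ ≤ β n * ‖gV χ‖)
    (n₀ n : ℕ) (hn : n₀ < n) :
    ‖(w n : E)‖ ^ 2
      + (1 / 3) * ∑ j ∈ Finset.Ico n₀ n, ‖(w (j + 1) : E) - (w j : E)‖ ^ 2
      + Δt * ∑ j ∈ Finset.Ico n₀ n,
          (ν * ‖gV (w (j + 1))‖ ^ 2 + (1 / 4) * δ * ‖gQ (y (j + 1))‖ ^ 2)
    ≤ ‖(w n₀ : E)‖ ^ 2
      + Δt * ∑ j ∈ Finset.Ico n₀ n,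
          ((1 / ν) * β j ^ 2 + 4 * δ * ‖gQ (d j)‖ ^ 2) := by
  have step := scheme_energy_step_le hν hΔt hΔtδ hscheme1 hscheme2 hb
  have summed := add_sum_Ico_le_add_sum_Ico_of_succ (a := fun j => ‖(w j : E)‖ ^ 2)
    (fun j => (add_assoc _ _ _).symm.trans_le (step j)) hn.le
  rw [mul_sum, mul_sum, mul_sum, add_assoc, ← sum_add_distrib]
  exact summed

/-- Stability estimate (48) of Lemma 3 with explicit constants. -/
theorem stability_estimate_l2
    {E F : Type*} [NormedAddCommGroup E] [InnerProductSpace ℝ E] [CompleteSpace E]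
    [NormedAddCommGroup F] [InnerProductSpace ℝ F] [CompleteSpace F]
    (V : Submodule ℝ E) {Q : Type*} [AddCommGroup Q] [Module ℝ Q]
    (gV : V →ₗ[ℝ] F) (gQ : Q →ₗ[ℝ] E)
    (ν δ Δt : ℝ) (hν : 0 < ν) (hδ : 0 < δ) (hΔt : 0 < Δt) (hΔtδ : Δt ≤ δ)
    (w : ℕ → V) (y : ℕ → Q) (b : ℕ → E) (d : ℕ → Q)
    (hscheme1 : ∀ n, ∀ χ : V,
      (1 / Δt) * ⟪(w (n + 1) : E) - (w n : E), (χ : E)⟫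
        + ν * ⟪gV (w (n + 1)), gV χ⟫ + ⟪gQ (y n), (χ : E)⟫
      = ⟪b n, (χ : E)⟫ + ⟪gQ (d n), (χ : E)⟫)
    (hscheme2 : ∀ n, ∀ ψ : Q, ⟪(w n : E), gQ ψ⟫ = δ * ⟪gQ (y n), gQ ψ⟫)
    (β : ℕ → ℝ)
    (hb : ∀ n, ∀ χ : V, ⟪b n, (χ : E)⟫ ≤ β n * ‖gV χ‖)
    (n₀ n : ℕ) (hn : n₀ < n) :
    ‖(w n : E)‖ ^ 2
      + (1 / 3) * ∑ j ∈ Finset.Ico n₀ n, ‖(w (j + 1) : E) - (w j : E)‖ ^ 2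
      + Δt * ∑ j ∈ Finset.Ico n₀ n,
          (ν * ‖gV (w (j + 1))‖ ^ 2 + (1 / 4) * δ * ‖gQ (y (j + 1))‖ ^ 2)
    ≤ ‖(w n₀ : E)‖ ^ 2
      + Δt * ∑ j ∈ Finset.Ico n₀ n,
          ((1 / ν) * β j ^ 2 + 4 * δ * ‖gQ (d j)‖ ^ 2) :=
  stability_estimate_l2_general V gV gQ ν δ Δt hν hΔt hΔtδ w y b d hscheme1 hscheme2 β hb n₀ n hn
end

section
/- Suppose Δt ≤ δ and the sequences w, y, b, d satisfy the discrete scheme. Then for every n the following one-step H¹-type inequality holds: (Δt/2)·‖(w_{n+1} − w_n)/Δt‖² + ν·( ‖g_V w_{n+1}‖² − ‖g_V w_n‖² + ‖g_V(w_{n+1} − w_n)‖² ) + δ·( ‖g_Q y_{n+1}‖² − ‖g_Q y_n‖² ) ≤ 4·Δt·( ‖b_n‖² + ‖g_Q d_n‖² ). (This is the one-step inequality obtained from (57)–(60) in the proof of estimate (50) of Lemma 3.) -/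
/-!
Test the momentum equation with the increment `e = w (n+1) - w n`. The viscous term splits by
`2⟪u, u - v⟫ = ‖u‖² - ‖v‖² + ‖u - v‖²`. Subtracting the stabilized constraint at two consecutive
steps gives `⟪e, gQ ψ⟫ = δ ⟪gQ (y (n+1) - y n), gQ ψ⟫`; with `ψ = y n` this turns the pressure term
into `δ/2 (‖gQ y (n+1)‖² - ‖gQ y n‖² - ‖gQ (y (n+1) - y n)‖²)`, and with `ψ = y (n+1) - y n` and
Cauchy–Schwarz it bounds the spurious last term by `‖e‖² / δ ≤ ‖e‖² / Δt`. The forcing terms are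
absorbed into the remaining `‖e‖² / Δt` by Young's inequality.
-/

open RealInnerProductSpace

section InnerProduct

variable {E : Type*} [NormedAddCommGroup E] [InnerProductSpace ℝ E]

theorem two_mul_real_inner_sub_right (u v : E) :
    2 * ⟪u, u - v⟫ = ‖u‖ ^ 2 - ‖v‖ ^ 2 + ‖u - v‖ ^ 2 := by
  rw [inner_sub_right, real_inner_self_eq_norm_sq, norm_sub_sq_real]
  ring

theorem two_mul_real_inner_le_mul_add_div {t : ℝ} (ht : 0 < t) (x y : E) :
    2 * ⟪x, y⟫ ≤ t * ‖x‖ ^ 2 + ‖y‖ ^ 2 / t := by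
  rw [add_div' _ _ _ ht.ne', le_div_iff₀ ht]
  nlinarith [real_inner_le_norm x y, sq_nonneg (t * ‖x‖ - ‖y‖)]

theorem mul_norm_le_of_real_inner_eq_mul_norm_sq {x r : E} {δ : ℝ}
    (h : ⟪x, r⟫ = δ * ‖r‖ ^ 2) : δ * ‖r‖ ≤ ‖x‖ := by
  rcases (norm_nonneg r).eq_or_lt with hr | hr
  · rw [← hr, mul_zero]
    exact norm_nonneg x
  · refine le_of_mul_le_mul_right ?_ hr
    calc δ * ‖r‖ * ‖r‖ = ⟪x, r⟫ := by rw [h]; ring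
      _ ≤ ‖x‖ * ‖r‖ := real_inner_le_norm x r

end InnerProduct

section StabilizedConstraint

variable {E Q : Type*} [NormedAddCommGroup E] [InnerProductSpace ℝ E] [AddCommGroup Q] [Module ℝ Q]
  {gQ : Q →ₗ[ℝ] E} {δ : ℝ} {x₀ x₁ : E} {y₀ y₁ : Q}
  (h₀ : ∀ ψ, ⟪x₀, gQ ψ⟫ = δ * ⟪gQ y₀, gQ ψ⟫) (h₁ : ∀ ψ, ⟪x₁, gQ ψ⟫ = δ * ⟪gQ y₁, gQ ψ⟫)
include h₀ h₁

theorem inner_sub_eq_of_stabilized_constraint (ψ : Q) :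
    ⟪x₁ - x₀, gQ ψ⟫ = δ * ⟪gQ y₁ - gQ y₀, gQ ψ⟫ := by
  rw [inner_sub_left, inner_sub_left, h₀, h₁]
  ring

theorem two_mul_inner_of_stabilized_constraint :
    2 * ⟪gQ y₀, x₁ - x₀⟫ = δ * (‖gQ y₁‖ ^ 2 - ‖gQ y₀‖ ^ 2 - ‖gQ y₁ - gQ y₀‖ ^ 2) := by
  rw [real_inner_comm, inner_sub_eq_of_stabilized_constraint h₀ h₁, inner_sub_left,
    real_inner_self_eq_norm_sq, norm_sub_sq_real]
  ring

theorem mul_norm_sub_le_of_stabilized_constraint :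
    δ * ‖gQ y₁ - gQ y₀‖ ≤ ‖x₁ - x₀‖ := by
  refine mul_norm_le_of_real_inner_eq_mul_norm_sq ?_
  rw [← map_sub, inner_sub_eq_of_stabilized_constraint h₀ h₁, map_sub,
    real_inner_self_eq_norm_sq]

end StabilizedConstraint

theorem one_step_h1_inequality_general
    {E F : Type*} [NormedAddCommGroup E] [InnerProductSpace ℝ E]
    [NormedAddCommGroup F] [InnerProductSpace ℝ F]
    (V : Submodule ℝ E) {Q : Type*} [AddCommGroup Q] [Module ℝ Q]
    (gV : V →ₗ[ℝ] F) (gQ : Q →ₗ[ℝ] E)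
    (ν δ Δt : ℝ) (hΔt : 0 < Δt) (hΔtδ : Δt ≤ δ)
    (w : ℕ → V) (y : ℕ → Q) (b : ℕ → E) (d : ℕ → Q)
    (hscheme1 : ∀ n, ∀ χ : V,
      (1 / Δt) * ⟪(w (n + 1) : E) - (w n : E), (χ : E)⟫
        + ν * ⟪gV (w (n + 1)), gV χ⟫ + ⟪gQ (y n), (χ : E)⟫
      = ⟪b n, (χ : E)⟫ + ⟪gQ (d n), (χ : E)⟫)
    (hscheme2 : ∀ n, ∀ ψ : Q, ⟪(w n : E), gQ ψ⟫ = δ * ⟪gQ (y n), gQ ψ⟫)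
    (n : ℕ) :
    (Δt / 2) * ‖(Δt)⁻¹ • ((w (n + 1) : E) - (w n : E))‖ ^ 2
      + ν * (‖gV (w (n + 1))‖ ^ 2 - ‖gV (w n)‖ ^ 2
              + ‖gV (w (n + 1)) - gV (w n)‖ ^ 2)
      + δ * (‖gQ (y (n + 1))‖ ^ 2 - ‖gQ (y n)‖ ^ 2)
    ≤ 4 * Δt * (‖b n‖ ^ 2 + ‖gQ (d n)‖ ^ 2) := by
  have hmomentum := hscheme1 n (w (n + 1) - w n)
  rw [Submodule.coe_sub, map_sub, real_inner_self_eq_norm_sq] at hmomentum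
  set e : E := (w (n + 1) : E) - (w n : E)
  set p : E := gQ (y n)
  set q : E := gQ (y (n + 1))
  have hviscous := two_mul_real_inner_sub_right (gV (w (n + 1))) (gV (w n))
  have hpressure : 2 * ⟪p, e⟫ = δ * (‖q‖ ^ 2 - ‖p‖ ^ 2 - ‖q - p‖ ^ 2) :=
    two_mul_inner_of_stabilized_constraint (hscheme2 n) (hscheme2 (n + 1))
  have hstab : δ * ‖q - p‖ ^ 2 ≤ ‖e‖ ^ 2 / Δt := by
    have hincr : δ * ‖q - p‖ ≤ ‖e‖ :=
      mul_norm_sub_le_of_stabilized_constraint (hscheme2 n) (hscheme2 (n + 1))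
    have hδ : 0 ≤ δ := hΔt.le.trans hΔtδ
    rw [le_div_iff₀ hΔt]
    calc δ * ‖q - p‖ ^ 2 * Δt ≤ (δ * ‖q - p‖) ^ 2 := by
          linear_combination mul_nonneg (mul_nonneg hδ (sq_nonneg ‖q - p‖)) (sub_nonneg.2 hΔtδ)
      _ ≤ ‖e‖ ^ 2 := pow_le_pow_left₀ (by positivity) hincr 2
  have hb := two_mul_real_inner_le_mul_add_div (by positivity : 0 < 4 * Δt) (b n) e
  have hd := two_mul_real_inner_le_mul_add_div (by positivity : 0 < 4 * Δt) (gQ (d n)) e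
  have hkinetic : (Δt / 2) * ‖Δt⁻¹ • e‖ ^ 2 = ‖e‖ ^ 2 / Δt / 2 := by
    rw [norm_smul, mul_pow, norm_inv, Real.norm_of_nonneg hΔt.le]
    field_simp
  rw [hkinetic]
  linear_combination 2 * hmomentum - ν * hviscous - hpressure + hstab + hb + hd

/-- One-step H¹-type inequality from (57)–(60) in the proof of estimate (50) of Lemma 3. -/
theorem one_step_h1_inequality
    {E F : Type*} [NormedAddCommGroup E] [InnerProductSpace ℝ E] [CompleteSpace E]
    [NormedAddCommGroup F] [InnerProductSpace ℝ F] [CompleteSpace F]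
    (V : Submodule ℝ E) {Q : Type*} [AddCommGroup Q] [Module ℝ Q]
    (gV : V →ₗ[ℝ] F) (gQ : Q →ₗ[ℝ] E)
    (ν δ Δt : ℝ) (hν : 0 < ν) (hδ : 0 < δ) (hΔt : 0 < Δt) (hΔtδ : Δt ≤ δ)
    (w : ℕ → V) (y : ℕ → Q) (b : ℕ → E) (d : ℕ → Q)
    (hscheme1 : ∀ n, ∀ χ : V,
      (1 / Δt) * ⟪(w (n + 1) : E) - (w n : E), (χ : E)⟫
        + ν * ⟪gV (w (n + 1)), gV χ⟫ + ⟪gQ (y n), (χ : E)⟫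
      = ⟪b n, (χ : E)⟫ + ⟪gQ (d n), (χ : E)⟫)
    (hscheme2 : ∀ n, ∀ ψ : Q, ⟪(w n : E), gQ ψ⟫ = δ * ⟪gQ (y n), gQ ψ⟫)
    (n : ℕ) :
    (Δt / 2) * ‖(Δt)⁻¹ • ((w (n + 1) : E) - (w n : E))‖ ^ 2
      + ν * (‖gV (w (n + 1))‖ ^ 2 - ‖gV (w n)‖ ^ 2
              + ‖gV (w (n + 1)) - gV (w n)‖ ^ 2)
      + δ * (‖gQ (y (n + 1))‖ ^ 2 - ‖gQ (y n)‖ ^ 2)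
    ≤ 4 * Δt * (‖b n‖ ^ 2 + ‖gQ (d n)‖ ^ 2) :=
  one_step_h1_inequality_general V gV gQ ν δ Δt hΔt hΔtδ w y b d hscheme1 hscheme2 n
end

section
/- Suppose the sequences w, y, b, d satisfy the discrete scheme and write t_j = j·Δt. Define W_n := t_n · w_n ∈ V, Y_n := t_n · y_n ∈ Q, B_n := t_{n+1} · b_n + w_n ∈ E and D_n := t_{n+1} · d_n − Δt · y_n ∈ Q. Then the sequences W, Y, B, D also satisfy the discrete scheme (with the same ν, δ, Δt): for every n, (1/Δt)⟨W_{n+1} − W_n, χ⟩ + ν⟨g_V W_{n+1}, g_V χ⟩ + ⟨g_Q Y_n, χ⟩ = ⟨B_n, χ⟩ + ⟨g_Q D_n, χ⟩ for all χ ∈ V, and ⟨W_n, g_Q ψ⟩ = δ⟨g_Q Y_n, g_Q ψ⟩ for all ψ ∈ Q. (This is the time-weighting transformation used in the proof of Lemma 5.) -/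
open RealInnerProductSpace

/-! Multiplying the momentum equation at step `n` by `tₙ₊₁` and using the discrete product rule
`tₙ₊₁ wₙ₊₁ − tₙ wₙ = tₙ₊₁ (wₙ₊₁ − wₙ) + Δt wₙ` gives the momentum equation for `W`, the extra
`Δt wₙ` going into `B` and the mismatch `tₙ₊₁ yₙ − tₙ yₙ = Δt yₙ` going into `D`. The divergence
equation is linear in `(w, y)`, so it survives the scaling by `tₙ`. -/

section DiscreteScheme

variable {E F Q : Type*} [NormedAddCommGroup E] [InnerProductSpace ℝ E]
  [NormedAddCommGroup F] [InnerProductSpace ℝ F] [AddCommGroup Q] [Module ℝ Q]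
  {V : Submodule ℝ E} (gV : V →ₗ[ℝ] F) (gQ : Q →ₗ[ℝ] E)

def MomentumEq (ν Δt : ℝ) (wOld wNew : V) (y : Q) (b : E) (d : Q) : Prop :=
  ∀ χ : V, (1 / Δt) * ⟪(wNew : E) - (wOld : E), (χ : E)⟫
      + ν * ⟪gV wNew, gV χ⟫ + ⟪gQ y, (χ : E)⟫
    = ⟪b, (χ : E)⟫ + ⟪gQ d, (χ : E)⟫

def DivergenceEq (δ : ℝ) (w : V) (y : Q) : Prop :=
  ∀ ψ : Q, ⟪(w : E), gQ ψ⟫ = δ * ⟪gQ y, gQ ψ⟫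

theorem MomentumEq.time_weight {ν Δt : ℝ} (hΔt : Δt ≠ 0) (t : ℝ)
    {wOld wNew : V} {y : Q} {b : E} {d : Q} (h : MomentumEq gV gQ ν Δt wOld wNew y b d) :
    MomentumEq gV gQ ν Δt (t • wOld) ((t + Δt) • wNew) (t • y)
      ((t + Δt) • b + (wOld : E)) ((t + Δt) • d - Δt • y) := by
  intro χ
  have hχ := h χ
  simp only [inner_sub_left] at hχ
  simp only [map_smul, map_sub, Submodule.coe_smul, real_inner_smul_left, inner_sub_left,
    inner_add_left]
  field_simp at hχ ⊢
  linear_combination (t + Δt) * hχ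

theorem DivergenceEq.smul {δ : ℝ} {w : V} {y : Q} (h : DivergenceEq gQ δ w y) (c : ℝ) :
    DivergenceEq gQ δ (c • w) (c • y) := by
  intro ψ
  rw [Submodule.coe_smul, map_smul, real_inner_smul_left, real_inner_smul_left, h ψ]
  ring

end DiscreteScheme

theorem time_weighting_transformation_general
    {E F : Type*} [NormedAddCommGroup E] [InnerProductSpace ℝ E]
    [NormedAddCommGroup F] [InnerProductSpace ℝ F]
    (V : Submodule ℝ E) {Q : Type*} [AddCommGroup Q] [Module ℝ Q]
    (gV : V →ₗ[ℝ] F) (gQ : Q →ₗ[ℝ] E)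
    (ν δ Δt : ℝ) (hΔt : 0 < Δt)
    (w : ℕ → V) (y : ℕ → Q) (b : ℕ → E) (d : ℕ → Q)
    (hscheme1 : ∀ n, ∀ χ : V,
      (1 / Δt) * ⟪(w (n + 1) : E) - (w n : E), (χ : E)⟫
        + ν * ⟪gV (w (n + 1)), gV χ⟫ + ⟪gQ (y n), (χ : E)⟫
      = ⟪b n, (χ : E)⟫ + ⟪gQ (d n), (χ : E)⟫)
    (hscheme2 : ∀ n, ∀ ψ : Q, ⟪(w n : E), gQ ψ⟫ = δ * ⟪gQ (y n), gQ ψ⟫)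
    (W : ℕ → V) (Y : ℕ → Q) (B : ℕ → E) (D : ℕ → Q)
    (hW : ∀ n, W n = ((n : ℝ) * Δt) • w n)
    (hY : ∀ n, Y n = ((n : ℝ) * Δt) • y n)
    (hB : ∀ n, B n = (((n : ℝ) + 1) * Δt) • b n + (w n : E))
    (hD : ∀ n, D n = (((n : ℝ) + 1) * Δt) • d n - Δt • y n) :
    (∀ n, ∀ χ : V,
      (1 / Δt) * ⟪(W (n + 1) : E) - (W n : E), (χ : E)⟫
        + ν * ⟪gV (W (n + 1)), gV χ⟫ + ⟪gQ (Y n), (χ : E)⟫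
      = ⟪B n, (χ : E)⟫ + ⟪gQ (D n), (χ : E)⟫)
    ∧ (∀ n, ∀ ψ : Q, ⟪(W n : E), gQ ψ⟫ = δ * ⟪gQ (Y n), gQ ψ⟫) := by
  refine ⟨fun n => ?_, fun n => ?_⟩
  · have next_time : ((n : ℝ) + 1) * Δt = n * Δt + Δt := by ring
    rw [hW, hW, hY, hB, hD, Nat.cast_succ, next_time]
    exact MomentumEq.time_weight gV gQ hΔt.ne' _ (hscheme1 n)
  · rw [hW, hY]
    exact DivergenceEq.smul gQ (hscheme2 n) _

/-- The time-weighting transformation used in the proof of Lemma 5: if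
`(w, y, b, d)` satisfies the discrete scheme, then so does
`(W, Y, B, D)` with `Wₙ = tₙ • wₙ`, `Yₙ = tₙ • yₙ`, `Bₙ = tₙ₊₁ • bₙ + wₙ`,
`Dₙ = tₙ₊₁ • dₙ − Δt • yₙ`, where `tⱼ = j·Δt`. -/
theorem time_weighting_transformation
    {E F : Type*} [NormedAddCommGroup E] [InnerProductSpace ℝ E] [CompleteSpace E]
    [NormedAddCommGroup F] [InnerProductSpace ℝ F] [CompleteSpace F]
    (V : Submodule ℝ E) {Q : Type*} [AddCommGroup Q] [Module ℝ Q]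
    (gV : V →ₗ[ℝ] F) (gQ : Q →ₗ[ℝ] E)
    (ν δ Δt : ℝ) (hν : 0 < ν) (hδ : 0 < δ) (hΔt : 0 < Δt)
    (w : ℕ → V) (y : ℕ → Q) (b : ℕ → E) (d : ℕ → Q)
    (hscheme1 : ∀ n, ∀ χ : V,
      (1 / Δt) * ⟪(w (n + 1) : E) - (w n : E), (χ : E)⟫
        + ν * ⟪gV (w (n + 1)), gV χ⟫ + ⟪gQ (y n), (χ : E)⟫
      = ⟪b n, (χ : E)⟫ + ⟪gQ (d n), (χ : E)⟫)
    (hscheme2 : ∀ n, ∀ ψ : Q, ⟪(w n : E), gQ ψ⟫ = δ * ⟪gQ (y n), gQ ψ⟫)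
    (W : ℕ → V) (Y : ℕ → Q) (B : ℕ → E) (D : ℕ → Q)
    (hW : ∀ n, W n = ((n : ℝ) * Δt) • w n)
    (hY : ∀ n, Y n = ((n : ℝ) * Δt) • y n)
    (hB : ∀ n, B n = (((n : ℝ) + 1) * Δt) • b n + (w n : E))
    (hD : ∀ n, D n = (((n : ℝ) + 1) * Δt) • d n - Δt • y n) :
    (∀ n, ∀ χ : V,
      (1 / Δt) * ⟪(W (n + 1) : E) - (W n : E), (χ : E)⟫
        + ν * ⟪gV (W (n + 1)), gV χ⟫ + ⟪gQ (Y n), (χ : E)⟫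
      = ⟪B n, (χ : E)⟫ + ⟪gQ (D n), (χ : E)⟫)
    ∧ (∀ n, ∀ ψ : Q, ⟪(W n : E), gQ ψ⟫ = δ * ⟪gQ (Y n), gQ ψ⟫) :=
  time_weighting_transformation_general V gV gQ ν δ Δt hΔt w y b d hscheme1 hscheme2 W Y B D hW hY
    hB hD
end

section
/- Let ν > 0, δ > 0, c ≥ 0, e ∈ V, r ∈ Q, T₁ ∈ G and T₂ ∈ E. Assume: (a) ν⟨g_V e, g_V χ⟩ + ⟨g_Q r, χ⟩ = ⟨T₁, div_V χ⟩ for all χ ∈ V; (b) ⟨div_V e, ψ⟩ = −δ⟨g_Q r, g_Q ψ⟩ − δ⟨T₂, g_Q ψ⟩ for all ψ ∈ Q; and (c) ‖div_V χ‖ ≤ c‖g_V χ‖ for all χ ∈ V. Then ν‖g_V e‖² + δ‖g_Q r‖² ≤ (c²/ν)‖T₁‖² + δ‖T₂‖². (This is the energy estimate for the error equations (13) of the stabilized Stokes projection, yielding inequality (15).) -/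
/-!
Testing the velocity equation with `e` and the pressure equation with `r`, and eliminating the
coupling term `⟪g_Q r, e⟫` by integration by parts, gives the energy identity
`ν ‖g_V e‖² + δ ‖g_Q r‖² = ⟪T₁, div_V e⟫ - δ ⟪T₂, g_Q r⟫`.
Cauchy–Schwarz, the bound `‖div_V e‖ ≤ c ‖g_V e‖` and Young's inequality then bound the right-hand
side by half the left-hand side plus half the claimed bound.
-/

open RealInnerProductSpace

theorem mul_le_sq_div_add_mul_sq {ν : ℝ} (hν : 0 < ν) (a b : ℝ) :
    a * b ≤ a ^ 2 / (2 * ν) + ν * b ^ 2 / 2 := by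
  rw [div_add_div _ _ (by positivity) two_ne_zero, le_div_iff₀ (by positivity)]
  nlinarith [sq_nonneg (a - ν * b)]

theorem stokes_error_energy_identity {E F G : Type*}
    [NormedAddCommGroup E] [InnerProductSpace ℝ E]
    [NormedAddCommGroup F] [InnerProductSpace ℝ F]
    [NormedAddCommGroup G] [InnerProductSpace ℝ G]
    {V : Submodule ℝ E} {Q : Submodule ℝ G}
    {gV : V →ₗ[ℝ] F} {gQ : Q →ₗ[ℝ] E} {divV : V →ₗ[ℝ] G}
    (hIBP : ∀ (ψ : Q) (χ : V), ⟪gQ ψ, (χ : E)⟫ = -⟪(ψ : G), divV χ⟫)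
    {ν δ : ℝ} {e : V} {r : Q} {T₁ : G} {T₂ : E}
    (ha : ∀ χ : V, ν * ⟪gV e, gV χ⟫ + ⟪gQ r, (χ : E)⟫ = ⟪T₁, divV χ⟫)
    (hb : ∀ ψ : Q, ⟪divV e, (ψ : G)⟫ = -(δ * ⟪gQ r, gQ ψ⟫) - δ * ⟪T₂, gQ ψ⟫) :
    ν * ‖gV e‖ ^ 2 + δ * ‖gQ r‖ ^ 2 = ⟪T₁, divV e⟫ - δ * ⟪T₂, gQ r⟫ := by
  have h := ha e
  rw [hIBP, real_inner_comm (divV e), hb, real_inner_self_eq_norm_sq,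
    real_inner_self_eq_norm_sq] at h
  linarith

theorem stabilized_stokes_energy_estimate_general
    {E F G : Type*} [NormedAddCommGroup E] [InnerProductSpace ℝ E]
    [NormedAddCommGroup F] [InnerProductSpace ℝ F]
    [NormedAddCommGroup G] [InnerProductSpace ℝ G]
    (V : Submodule ℝ E) (Q : Submodule ℝ G)
    (gV : V →ₗ[ℝ] F) (gQ : Q →ₗ[ℝ] E) (divV : V →ₗ[ℝ] G)
    (hIBP : ∀ (ψ : Q) (χ : V), ⟪gQ ψ, (χ : E)⟫ = -⟪(ψ : G), divV χ⟫)
    (ν δ c : ℝ) (hν : 0 < ν) (hδ : 0 < δ)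
    (e : V) (r : Q) (T₁ : G) (T₂ : E)
    (ha : ∀ χ : V, ν * ⟪gV e, gV χ⟫ + ⟪gQ r, (χ : E)⟫ = ⟪T₁, divV χ⟫)
    (hb : ∀ ψ : Q, ⟪divV e, (ψ : G)⟫ = -(δ * ⟪gQ r, gQ ψ⟫) - δ * ⟪T₂, gQ ψ⟫)
    (hc' : ∀ χ : V, ‖divV χ‖ ≤ c * ‖gV χ‖) :
    ν * ‖gV e‖ ^ 2 + δ * ‖gQ r‖ ^ 2
      ≤ (c ^ 2 / ν) * ‖T₁‖ ^ 2 + δ * ‖T₂‖ ^ 2 := by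
  have hdiv : ⟪T₁, divV e⟫ ≤ c * ‖T₁‖ * ‖gV e‖ :=
    calc ⟪T₁, divV e⟫ ≤ ‖T₁‖ * ‖divV e‖ := real_inner_le_norm _ _
      _ ≤ ‖T₁‖ * (c * ‖gV e‖) := mul_le_mul_of_nonneg_left (hc' e) (norm_nonneg _)
      _ = c * ‖T₁‖ * ‖gV e‖ := by ring
  have hstab : -⟪T₂, gQ r⟫ ≤ ‖T₂‖ * ‖gQ r‖ :=
    (neg_le_abs _).trans (abs_real_inner_le_norm _ _)
  have hyoung₁ := mul_le_sq_div_add_mul_sq hν (c * ‖T₁‖) ‖gV e‖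
  have hyoung₂ := mul_le_mul_of_nonneg_left (two_mul_le_add_sq ‖T₂‖ ‖gQ r‖) hδ.le
  have hT₁ : c ^ 2 / ν * ‖T₁‖ ^ 2 = 2 * ((c * ‖T₁‖) ^ 2 / (2 * ν)) := by
    field_simp
  have henergy := stokes_error_energy_identity hIBP ha hb
  linarith [mul_le_mul_of_nonneg_left hstab hδ.le]

/-- Energy estimate for the error equations (13) of the stabilized Stokes
projection, yielding inequality (15). -/
theorem stabilized_stokes_energy_estimate
    {E F G : Type*} [NormedAddCommGroup E] [InnerProductSpace ℝ E] [CompleteSpace E]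
    [NormedAddCommGroup F] [InnerProductSpace ℝ F] [CompleteSpace F]
    [NormedAddCommGroup G] [InnerProductSpace ℝ G] [CompleteSpace G]
    (V : Submodule ℝ E) (Q : Submodule ℝ G)
    (gV : V →ₗ[ℝ] F) (gQ : Q →ₗ[ℝ] E) (divV : V →ₗ[ℝ] G)
    (hIBP : ∀ (ψ : Q) (χ : V), ⟪gQ ψ, (χ : E)⟫ = -⟪(ψ : G), divV χ⟫)
    (ν δ c : ℝ) (hν : 0 < ν) (hδ : 0 < δ) (hc : 0 ≤ c)
    (e : V) (r : Q) (T₁ : G) (T₂ : E)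
    (ha : ∀ χ : V, ν * ⟪gV e, gV χ⟫ + ⟪gQ r, (χ : E)⟫ = ⟪T₁, divV χ⟫)
    (hb : ∀ ψ : Q, ⟪divV e, (ψ : G)⟫ = -(δ * ⟪gQ r, gQ ψ⟫) - δ * ⟪T₂, gQ ψ⟫)
    (hc' : ∀ χ : V, ‖divV χ‖ ≤ c * ‖gV χ‖) :
    ν * ‖gV e‖ ^ 2 + δ * ‖gQ r‖ ^ 2
      ≤ (c ^ 2 / ν) * ‖T₁‖ ^ 2 + δ * ‖T₂‖ ^ 2 :=
  stabilized_stokes_energy_estimate_general V Q gV gQ divV hIBP ν δ c hν hδ e r T₁ T₂ ha hb hc'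
end

section
/- Let H be a real Hilbert space, let p : ℝ → H be continuously differentiable, let q : ℕ → H be a sequence, let Δt > 0 and n ≥ 1, and set t_j = j·Δt. Then (1/2) · Σ_{j=1}^{n} Δt · ‖q_j − p(t_j)‖² ≤ Σ_{j=1}^{n} Δt · ‖2q_j − q_{j−1} − p(t_j)‖² + (Δt/2) · ‖q_0 − p(0)‖² + Δt² · ∫_0^{t_n} ‖p'(t)‖² dt. (This is the averaging inequality relating the incremental-scheme pressures q_h^n to the extrapolated pressures q̂_h^n = 2q_h^n − q_h^{n−1}, used in the proof of Theorem 3.) -/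
/-!
Write `eⱼ = qⱼ - p(tⱼ)` and `dⱼ = p(tⱼ₊₁) - p(tⱼ)`, so that `2qⱼ₊₁ - qⱼ - p(tⱼ₊₁) = 2eⱼ₊₁ - eⱼ + dⱼ`.
In an inner product space `‖e‖² ≤ ‖2e - f + d‖² + ‖f‖²/2 + ‖d‖²`, the difference being a sum of
squares. Summing over `j`, the terms `‖eⱼ‖²/2` on the right are absorbed by the left-hand side up
to `‖e₀‖²/2`, and `‖dⱼ‖² ≤ Δt ∫_{tⱼ}^{tⱼ₊₁} ‖p'‖²` by the fundamental theorem of calculus.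
-/

open Finset intervalIntegral
open scoped RealInnerProductSpace

theorem Finset.sum_Icc_one_eq_sum_range {M : Type*} [AddCommMonoid M] (f : ℕ → M) (n : ℕ) :
    ∑ j ∈ Icc 1 n, f j = ∑ i ∈ range n, f (i + 1) := by
  rw [range_eq_Ico, sum_Ico_add']
  rfl

theorem Finset.sum_range_le_add_sum_range_succ {R : Type*} [AddCommMonoid R] [PartialOrder R]
    [IsOrderedAddMonoid R] (a : ℕ → R) {n : ℕ} (ha : 0 ≤ a n) :
    ∑ i ∈ range n, a i ≤ a 0 + ∑ i ∈ range n, a (i + 1) := by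
  rw [add_comm, ← sum_range_succ', sum_range_succ]
  exact le_add_of_nonneg_right ha

section InnerProductSpace

variable {E : Type*} [NormedAddCommGroup E] [InnerProductSpace ℝ E]

theorem norm_sq_le_norm_two_smul_sub_add_sq (e f d : E) :
    ‖e‖ ^ 2 ≤ ‖(2 : ℝ) • e - f + d‖ ^ 2 + ‖f‖ ^ 2 / 2 + ‖d‖ ^ 2 := by
  have hsos : ‖(2 : ℝ) • e - f + d‖ ^ 2 + ‖f‖ ^ 2 / 2 + ‖d‖ ^ 2 - ‖e‖ ^ 2
      = ‖(3 : ℝ) • e - (2 : ℝ) • f + (2 : ℝ) • d‖ ^ 2 / 3 + ‖f + (2 : ℝ) • d‖ ^ 2 / 6 := by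
    simp only [← real_inner_self_eq_norm_sq, inner_add_left, inner_add_right,
      inner_sub_left, inner_sub_right, real_inner_smul_left, real_inner_smul_right,
      real_inner_comm f e, real_inner_comm d e, real_inner_comm d f]
    ring
  linarith [sq_nonneg ‖(3 : ℝ) • e - (2 : ℝ) • f + (2 : ℝ) • d‖, sq_nonneg ‖f + (2 : ℝ) • d‖]

theorem sum_norm_sq_le_sum_norm_two_smul_sub_add_sq (e d : ℕ → E) (n : ℕ) :
    (∑ i ∈ range n, ‖e (i + 1)‖ ^ 2) / 2
      ≤ ∑ i ∈ range n, ‖(2 : ℝ) • e (i + 1) - e i + d i‖ ^ 2 + ‖e 0‖ ^ 2 / 2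
        + ∑ i ∈ range n, ‖d i‖ ^ 2 := by
  have hterm := sum_le_sum fun i (_ : i ∈ range n) =>
    norm_sq_le_norm_two_smul_sub_add_sq (e (i + 1)) (e i) (d i)
  have hshift := sum_range_le_add_sum_range_succ (fun i => ‖e i‖ ^ 2) (sq_nonneg ‖e n‖)
  rw [sum_add_distrib, sum_add_distrib, ← sum_div] at hterm
  linarith

theorem norm_sub_sq_le_mul_integral_norm_deriv_sq {f : ℝ → E} (hf : ContDiff ℝ 1 f) {a b : ℝ}
    (hab : a ≤ b) : ‖f b - f a‖ ^ 2 ≤ (b - a) * ∫ t in a..b, ‖deriv f t‖ ^ 2 := by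
  obtain rfl | hlt := hab.eq_or_lt
  · simp
  set d := f b - f a
  set L := b - a
  have hL : 0 < L := sub_pos.2 hlt
  have hf' : Continuous (deriv f) := hf.continuous_deriv le_rfl
  -- FTC for the real function `⟪d, f t⟫` avoids Bochner integrals, hence completeness of `E`
  have ftc : ∫ t in a..b, ⟪d, deriv f t⟫ = ‖d‖ ^ 2 := by
    have hderiv (t : ℝ) : HasDerivAt (fun t => ⟪d, f t⟫) ⟪d, deriv f t⟫ t := by
      simpa using (hasDerivAt_const t d).inner ℝ (hf.differentiable one_ne_zero t).hasDerivAt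
    rw [integral_eq_sub_of_hasDerivAt (fun t _ => hderiv t)
      ((continuous_const.inner hf').intervalIntegrable _ _)]
    simp [← inner_sub_right, d]
  -- weighted AM–GM in place of Cauchy–Schwarz for `∫ ‖f'‖`
  have amgm (t : ℝ) : ⟪d, deriv f t⟫ ≤ ‖d‖ ^ 2 / (2 * L) + L / 2 * ‖deriv f t‖ ^ 2 := by
    have : ‖d‖ * ‖deriv f t‖ ≤ ‖d‖ ^ 2 / (2 * L) + L / 2 * ‖deriv f t‖ ^ 2 := by
      rw [div_add' _ _ _ (by positivity), le_div_iff₀ (by positivity)]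
      nlinarith [sq_nonneg (‖d‖ - L * ‖deriv f t‖)]
    linarith [real_inner_le_norm d (deriv f t)]
  have hsq : IntervalIntegrable (fun t => L / 2 * ‖deriv f t‖ ^ 2) MeasureTheory.volume a b :=
    (continuous_const.mul (hf'.norm.pow 2)).intervalIntegrable _ _
  have hint := integral_mono_on hab ((continuous_const.inner hf').intervalIntegrable _ _)
    (intervalIntegrable_const.add hsq) fun t _ => amgm t
  rw [ftc, integral_add intervalIntegrable_const hsq, integral_const, integral_const_mul,
    smul_eq_mul, show b - a = L from rfl, mul_div_left_comm,
    show L / (2 * L) = 1 / 2 by field_simp] at hint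
  linarith

theorem sum_norm_sub_sq_le_mul_integral_norm_deriv_sq {f : ℝ → E} (hf : ContDiff ℝ 1 f)
    {h : ℝ} (hh : 0 ≤ h) (n : ℕ) :
    ∑ i ∈ range n, ‖f (((i + 1 : ℕ) : ℝ) * h) - f ((i : ℝ) * h)‖ ^ 2
      ≤ h * ∫ t in (0 : ℝ)..(n : ℝ) * h, ‖deriv f t‖ ^ 2 := by
  have hadj := sum_integral_adjacent_intervals (a := fun k : ℕ => (k : ℝ) * h)
    (f := fun t => ‖deriv f t‖ ^ 2) (μ := MeasureTheory.volume) (n := n)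
    fun k _ => ((hf.continuous_deriv le_rfl).norm.pow 2).intervalIntegrable _ _
  rw [Nat.cast_zero, zero_mul] at hadj
  rw [← hadj, mul_sum]
  refine sum_le_sum fun i _ => ?_
  rw [Nat.cast_succ]
  have := norm_sub_sq_le_mul_integral_norm_deriv_sq hf
    (mul_le_mul_of_nonneg_right (Nat.cast_le.2 i.le_succ) hh)
  rwa [Nat.cast_succ, ← sub_mul, add_sub_cancel_left, one_mul] at this

end InnerProductSpace

theorem extrapolated_pressure_averaging_inequality_general
    {H : Type*} [NormedAddCommGroup H] [InnerProductSpace ℝ H]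
    (p : ℝ → H) (hp : ContDiff ℝ 1 p) (q : ℕ → H)
    (Δt : ℝ) (hΔt : 0 < Δt) (n : ℕ) :
    (1 / 2) * ∑ j ∈ Finset.Icc 1 n, Δt * ‖q j - p ((j : ℝ) * Δt)‖ ^ 2
      ≤ ∑ j ∈ Finset.Icc 1 n,
            Δt * ‖(2 : ℝ) • q j - q (j - 1) - p ((j : ℝ) * Δt)‖ ^ 2
        + (Δt / 2) * ‖q 0 - p 0‖ ^ 2
        + Δt ^ 2 * ∫ t in (0 : ℝ)..((n : ℝ) * Δt), ‖deriv p t‖ ^ 2 := by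
  set e : ℕ → H := fun j => q j - p ((j : ℝ) * Δt)
  set d : ℕ → H := fun i => p (((i + 1 : ℕ) : ℝ) * Δt) - p ((i : ℝ) * Δt)
  have hext (i : ℕ) : (2 : ℝ) • q (i + 1) - q (i + 1 - 1) - p (((i + 1 : ℕ) : ℝ) * Δt)
      = (2 : ℝ) • e (i + 1) - e i + d i := by
    simp only [e, d, Nat.add_sub_cancel]
    module
  have he0 : e 0 = q 0 - p 0 := by simp [e]
  have hdisc := sum_norm_sq_le_sum_norm_two_smul_sub_add_sq e d n
  have hincr := sum_norm_sub_sq_le_mul_integral_norm_deriv_sq hp hΔt.le n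
  rw [sum_Icc_one_eq_sum_range, sum_Icc_one_eq_sum_range, ← mul_sum, ← mul_sum, ← he0]
  simp only [hext]
  linarith [mul_le_mul_of_nonneg_left hdisc hΔt.le, mul_le_mul_of_nonneg_left hincr hΔt.le]

/-- Averaging inequality relating the incremental-scheme pressures to the
extrapolated pressures `q̂ⱼ = 2qⱼ − qⱼ₋₁`, used in the proof of Theorem 3. -/
theorem extrapolated_pressure_averaging_inequality
    {H : Type*} [NormedAddCommGroup H] [InnerProductSpace ℝ H] [CompleteSpace H]
    (p : ℝ → H) (hp : ContDiff ℝ 1 p) (q : ℕ → H)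
    (Δt : ℝ) (hΔt : 0 < Δt) (n : ℕ) (hn : 1 ≤ n) :
    (1 / 2) * ∑ j ∈ Finset.Icc 1 n, Δt * ‖q j - p ((j : ℝ) * Δt)‖ ^ 2
      ≤ ∑ j ∈ Finset.Icc 1 n,
            Δt * ‖(2 : ℝ) • q j - q (j - 1) - p ((j : ℝ) * Δt)‖ ^ 2
        + (Δt / 2) * ‖q 0 - p 0‖ ^ 2
        + Δt ^ 2 * ∫ t in (0 : ℝ)..((n : ℝ) * Δt), ‖deriv p t‖ ^ 2 :=
  extrapolated_pressure_averaging_inequality_general p hp q Δt hΔt n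
end
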